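/- arXiv:2407.09720 — 2 statements merged into one kernel-verified Lean document; each statement's English description precedes it below -/
import Mathlib

section
/- Let u, G be C² with bounded second derivatives on ℝⁿ and g_δ a symmetric nonnegative kernel supported in B(0, δ/2) with unit integral. For x in the deep interior of region 1 (B(x,δ/2) ⊂ region 1), the leading-order expansion τ_sfs(x) = ∫ (∇G(y) − ∇G(x))·((y−x)·∇(∇u)(x)) g_δ(x−y) dy + O(δ³) holds, where ∇(∇u)(x) is the Hessian of u at x and the error constant depends only on the C³ norms of G and u near x. -/
/-!
With `w y = g_δ (x - y)`, `τ_sfs(x)` is the `w`-weighted covariance of `∇G` and `∇u`. Split `∇u`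
into its first-order Taylor polynomial at `x` plus a remainder `R`. The covariance is bilinear and
vanishes on constants; as `g_δ` is even, `w` has vanishing first moment about `x`, so the linear
part contributes exactly the leading integral. What is left is `∫ ⟨∇G - ∇G‾, R⟩ w`: on the
support of `w` (radius `δ/2`) the first factor is `O(δ)` by the bound on `D²G` and `R` is `O(δ²)`
by the bound on `D³u`, so the error is at most `M² δ³ / 4`.
-/

open MeasureTheory Metric Function
open scoped RealInnerProductSpace

noncomputable section

section WeightedCov

variable {α H : Type*} [MeasurableSpace α] {μ : Measure α}
  [NormedAddCommGroup H] [InnerProductSpace ℝ H]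

/-- With `w = g_δ (x - ·)` and `a = ∇G`, `b = ∇u`, this is `τ_sfs(x) = (∇G·∇u)‾ - ∇G‾·∇u‾`. -/
def weightedCov (μ : Measure α) (w : α → ℝ) (a b : α → H) : ℝ :=
  ∫ y, ⟪a y, b y⟫ * w y ∂μ - ⟪∫ y, w y • a y ∂μ, ∫ y, w y • b y ∂μ⟫

variable {w : α → ℝ} {a b b₁ b₂ : α → H}

theorem weightedCov_add_right (hab₁ : Integrable (fun y => ⟪a y, b₁ y⟫ * w y) μ)
    (hab₂ : Integrable (fun y => ⟪a y, b₂ y⟫ * w y) μ) (hb₁ : Integrable (fun y => w y • b₁ y) μ)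
    (hb₂ : Integrable (fun y => w y • b₂ y) μ) :
    weightedCov μ w a (b₁ + b₂) = weightedCov μ w a b₁ + weightedCov μ w a b₂ := by
  simp only [weightedCov, Pi.add_apply, inner_add_right, add_mul, smul_add]
  rw [integral_add hab₁ hab₂, integral_add hb₁ hb₂, inner_add_right]
  ring

theorem norm_integral_smul_le_of_forall_ne_zero {F : α → H} {C : ℝ} (hw₀ : ∀ y, 0 ≤ w y)
    (hw : Integrable w μ) (hw₁ : ∫ y, w y ∂μ = 1) (hF : ∀ y, w y ≠ 0 → ‖F y‖ ≤ C) :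
    ‖∫ y, w y • F y ∂μ‖ ≤ C := by
  have hpt : ∀ y, ‖w y • F y‖ ≤ w y * C := fun y => by
    rcases eq_or_ne (w y) 0 with h | h
    · simp [h]
    · rw [norm_smul, Real.norm_of_nonneg (hw₀ y)]
      exact mul_le_mul_of_nonneg_left (hF y h) (hw₀ y)
  calc ‖∫ y, w y • F y ∂μ‖ ≤ ∫ y, w y * C ∂μ :=
        norm_integral_le_of_norm_le (hw.mul_const C) (.of_forall hpt)
    _ = C := by rw [integral_mul_const, hw₁, one_mul]

variable [CompleteSpace H]

theorem integral_inner_const_mul (c : H) (hb : Integrable (fun y => w y • b y) μ) :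
    ∫ y, ⟪c, b y⟫ * w y ∂μ = ⟪c, ∫ y, w y • b y ∂μ⟫ := by
  rw [← integral_inner hb c]
  congr with y
  rw [real_inner_smul_right, mul_comm]

theorem integral_inner_sub_const_mul (c : H) (hab : Integrable (fun y => ⟪a y, b y⟫ * w y) μ)
    (hb : Integrable (fun y => w y • b y) μ) :
    ∫ y, ⟪a y - c, b y⟫ * w y ∂μ = ∫ y, ⟪a y, b y⟫ * w y ∂μ - ⟪c, ∫ y, w y • b y ∂μ⟫ := by
  have hcb : Integrable (fun y => ⟪c, b y⟫ * w y) μ :=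
    (hb.const_inner (𝕜 := ℝ) c).congr
      (.of_forall fun y => by simp only [real_inner_smul_right, mul_comm])
  simp_rw [inner_sub_left, sub_mul]
  rw [integral_sub hab hcb, integral_inner_const_mul c hb]

theorem weightedCov_eq_integral_inner_sub_mean (hab : Integrable (fun y => ⟪a y, b y⟫ * w y) μ)
    (hb : Integrable (fun y => w y • b y) μ) :
    weightedCov μ w a b = ∫ y, ⟪a y - ∫ z, w z • a z ∂μ, b y⟫ * w y ∂μ := by
  rw [integral_inner_sub_const_mul _ hab hb, weightedCov]

theorem weightedCov_eq_integral_inner_sub_of_integral_eq_zero (c : H)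
    (hab : Integrable (fun y => ⟪a y, b y⟫ * w y) μ) (hb : Integrable (fun y => w y • b y) μ)
    (hb₀ : ∫ y, w y • b y ∂μ = 0) :
    weightedCov μ w a b = ∫ y, ⟪a y - c, b y⟫ * w y ∂μ := by
  rw [integral_inner_sub_const_mul c hab hb, weightedCov, hb₀, inner_zero_right, inner_zero_right]

theorem weightedCov_const_right (hw₁ : ∫ y, w y ∂μ = 1) (ha : Integrable (fun y => w y • a y) μ)
    (c : H) : weightedCov μ w a (fun _ => c) = 0 := by
  have hac : ∫ y, ⟪a y, c⟫ * w y ∂μ = ⟪∫ y, w y • a y ∂μ, c⟫ := by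
    simp_rw [real_inner_comm c]
    exact integral_inner_const_mul c ha
  rw [weightedCov, hac, integral_smul_const, hw₁, one_smul, sub_self]

theorem abs_integral_inner_sub_mean_mul_le {R : α → H} {c : H} {K L : ℝ} (hw₀ : ∀ y, 0 ≤ w y)
    (hw : Integrable w μ) (hw₁ : ∫ y, w y ∂μ = 1) (ha : Integrable (fun y => w y • a y) μ)
    (haK : ∀ y, w y ≠ 0 → ‖a y - c‖ ≤ K) (hRL : ∀ y, w y ≠ 0 → ‖R y‖ ≤ L) :
    |∫ y, ⟪a y - ∫ z, w z • a z ∂μ, R y⟫ * w y ∂μ| ≤ 2 * K * L := by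
  set m := ∫ z, w z • a z ∂μ
  have hmc : ‖m - c‖ ≤ K := by
    have : m - c = ∫ y, w y • (a y - c) ∂μ := by
      simp_rw [smul_sub]
      rw [integral_sub ha (hw.smul_const c), integral_smul_const, hw₁, one_smul]
    rw [this]
    exact norm_integral_smul_le_of_forall_ne_zero hw₀ hw hw₁ haK
  have hpt : ∀ y, w y ≠ 0 → ‖⟪a y - m, R y⟫‖ ≤ 2 * K * L := fun y hy => by
    have hK : 0 ≤ K := (norm_nonneg _).trans (haK y hy)
    have ham : ‖a y - m‖ ≤ 2 * K := by
      calc ‖a y - m‖ = ‖(a y - c) - (m - c)‖ := by rw [sub_sub_sub_cancel_right]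
        _ ≤ K + K := (norm_sub_le _ _).trans (add_le_add (haK y hy) hmc)
        _ = 2 * K := by ring
    calc ‖⟪a y - m, R y⟫‖ ≤ ‖a y - m‖ * ‖R y‖ := norm_inner_le_norm _ _
      _ ≤ 2 * K * L := mul_le_mul ham (hRL y hy) (norm_nonneg _) (by positivity)
  have := norm_integral_smul_le_of_forall_ne_zero hw₀ hw hw₁ hpt
  simpa only [smul_eq_mul, Real.norm_eq_abs, mul_comm (w _)] using this

end WeightedCov

theorem Function.Odd.integral_eq_zero {G E : Type*} [MeasurableSpace G] [AddGroup G]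
    [MeasurableNeg G] [NormedAddCommGroup E] [NormedSpace ℝ E] {μ : Measure G}
    [μ.IsNegInvariant] {f : G → E} (hf : f.Odd) : ∫ y, f y ∂μ = 0 := by
  have h := integral_neg_eq_self f μ
  rw [funext hf, integral_neg, neg_eq_iff_add_eq_zero, ← two_smul ℝ, smul_eq_zero] at h
  exact h.resolve_left two_ne_zero

theorem Function.Even.integral_comp_sub_smul_sub_eq_zero {E : Type*} [NormedAddCommGroup E]
    [NormedSpace ℝ E] [MeasurableSpace E] [MeasurableAdd E] [MeasurableNeg E] {μ : Measure E}
    [μ.IsNegInvariant] [μ.IsAddLeftInvariant] {g : E → ℝ} (hg : g.Even) (x : E) :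
    ∫ y, g (x - y) • (y - x) ∂μ = 0 := by
  have h := integral_sub_left_eq_self (fun z => g z • -z) μ x
  simp only [neg_sub] at h
  rw [h]
  exact Function.Odd.integral_eq_zero fun z => by simp only [hg.eq, neg_neg, smul_neg]

theorem MeasureTheory.Integrable.smul_continuous_of_support_subset {X V : Type*}
    [TopologicalSpace X] [T2Space X] [MeasurableSpace X] [OpensMeasurableSpace X]
    [NormedAddCommGroup V] [NormedSpace ℝ V] [SecondCountableTopologyEither X V] {μ : Measure X}
    {w : X → ℝ} {K : Set X} (hw : Integrable w μ) (hK : IsCompact K) (hwK : support w ⊆ K)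
    {F : X → V} (hF : Continuous F) : Integrable (fun y => w y • F y) μ :=
  (integrableOn_iff_integrable_of_support_subset ((support_smul_subset_left w F).trans hwK)).mp
    (hw.integrableOn.smul_continuousOn hF.continuousOn hK)

theorem weightedCov_eq_linear_add_remainder {E H : Type*} [NormedAddCommGroup E]
    [NormedSpace ℝ E] [CompleteSpace E] [SecondCountableTopology E] [MeasurableSpace E]
    [OpensMeasurableSpace E] [NormedAddCommGroup H] [InnerProductSpace ℝ H] [CompleteSpace H]
    {μ : Measure E} {w : E → ℝ} {K : Set E} {a b : E → H} {x : E} (hw : Integrable w μ)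
    (hK : IsCompact K) (hwK : support w ⊆ K) (hw₁ : ∫ y, w y ∂μ = 1)
    (hmom : ∫ y, w y • (y - x) ∂μ = 0)
    (ha : Continuous a) (hb : Continuous b) (L : E →L[ℝ] H) :
    weightedCov μ w a b = ∫ y, ⟪a y - a x, L (y - x)⟫ * w y ∂μ
      + ∫ y, ⟪a y - ∫ z, w z • a z ∂μ, b y - b x - L (y - x)⟫ * w y ∂μ := by
  have hvec : ∀ {F : E → H}, Continuous F → Integrable (fun y => w y • F y) μ :=
    hw.smul_continuous_of_support_subset hK hwK
  have hreal : ∀ {F : E → H}, Continuous F → Integrable (fun y => ⟪a y, F y⟫ * w y) μ :=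
    fun hF => (hw.smul_continuous_of_support_subset hK hwK (ha.inner hF)).congr
      (.of_forall fun y => by simp only [smul_eq_mul, mul_comm])
  have hℓ : Continuous fun y => L (y - x) := by fun_prop
  have hR : Continuous fun y => b y - b x - L (y - x) := by fun_prop
  have hL₀ : ∫ y, w y • L (y - x) ∂μ = 0 := by
    simp_rw [← L.map_smul]
    rw [L.integral_comp_comm
      (hw.smul_continuous_of_support_subset hK hwK (continuous_sub_right x)), hmom, map_zero]
  have hsplit : b = ((fun _ => b x) + fun y => L (y - x)) + fun y => b y - b x - L (y - x) := by
    ext y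
    simp only [Pi.add_apply]
    abel
  conv_lhs => rw [hsplit]
  rw [weightedCov_add_right (hreal (continuous_const.add hℓ)) (hreal hR)
      (hvec (continuous_const.add hℓ)) (hvec hR),
    weightedCov_add_right (hreal continuous_const) (hreal hℓ) (hvec continuous_const) (hvec hℓ),
    weightedCov_const_right hw₁ (hvec ha), zero_add,
    weightedCov_eq_integral_inner_sub_of_integral_eq_zero (a x) (hreal hℓ) (hvec hℓ) hL₀,
    weightedCov_eq_integral_inner_sub_mean (hreal hR) (hvec hR)]

section Taylor

variable {E F : Type*} [NormedAddCommGroup E] [NormedSpace ℝ E] [NormedAddCommGroup F]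
  [NormedSpace ℝ F] {h : E → F} {M : ℝ}

theorem norm_fderiv_sub_le_of_norm_iteratedFDeriv_two_le (hh : ContDiff ℝ 2 h)
    (hM : ∀ z, ‖iteratedFDeriv ℝ 2 h z‖ ≤ M) (y z : E) :
    ‖fderiv ℝ h y - fderiv ℝ h z‖ ≤ M * ‖y - z‖ := by
  have hdiff : Differentiable ℝ (fderiv ℝ h) :=
    (hh.fderiv_right (m := 1) le_rfl).differentiable one_ne_zero
  have hbound : ∀ v, ‖fderiv ℝ (fderiv ℝ h) v‖ ≤ M := fun v => by
    rw [← norm_iteratedFDeriv_one, norm_iteratedFDeriv_fderiv]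
    exact hM v
  exact convex_univ.norm_image_sub_le_of_norm_fderiv_le (fun v _ => hdiff v) (fun v _ => hbound v)
    trivial trivial

theorem norm_sub_sub_fderiv_apply_le_of_norm_iteratedFDeriv_two_le (hh : ContDiff ℝ 2 h)
    (hM : ∀ z, ‖iteratedFDeriv ℝ 2 h z‖ ≤ M) (x y : E) :
    ‖h y - h x - fderiv ℝ h x (y - x)‖ ≤ M * ‖y - x‖ ^ 2 := by
  have hM₀ : 0 ≤ M := (norm_nonneg _).trans (hM x)
  have hbound : ∀ z ∈ closedBall x ‖y - x‖, ‖fderiv ℝ h z - fderiv ℝ h x‖ ≤ M * ‖y - x‖ :=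
    fun z hz => (norm_fderiv_sub_le_of_norm_iteratedFDeriv_two_le hh hM z x).trans
      (mul_le_mul_of_nonneg_left (mem_closedBall_iff_norm.mp hz) hM₀)
  have := (convex_closedBall x ‖y - x‖).norm_image_sub_le_of_norm_fderiv_le'
    (fun z _ => hh.differentiable two_ne_zero z) hbound
    (mem_closedBall_self (norm_nonneg _)) (mem_closedBall_iff_norm.mpr le_rfl)
  rwa [mul_assoc, ← sq] at this

end Taylor

section Gradient

variable {E : Type*} [NormedAddCommGroup E] [InnerProductSpace ℝ E] [CompleteSpace E]
  {f : E → ℝ}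

/-- Over `ℝ` the conjugate-linear Riesz isometry is linear, so it can be composed with
derivatives. -/
def gradientEquiv : StrongDual ℝ E ≃ₗᵢ[ℝ] E :=
  { (InnerProductSpace.toDual ℝ E).symm with map_smul' := fun c p => by simp }

theorem gradient_eq_gradientEquiv_comp (f : E → ℝ) :
    gradient f = gradientEquiv ∘ fderiv ℝ f := rfl

theorem ContDiff.gradient {n : ℕ} (hf : ContDiff ℝ (n + 1) f) : ContDiff ℝ n (gradient f) :=
  gradientEquiv.contDiff.comp (hf.fderiv_right le_rfl)

theorem norm_iteratedFDeriv_gradient (f : E → ℝ) (k : ℕ) (z : E) :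
    ‖iteratedFDeriv ℝ k (gradient f) z‖ = ‖iteratedFDeriv ℝ (k + 1) f z‖ := by
  rw [gradient_eq_gradientEquiv_comp, LinearIsometryEquiv.norm_iteratedFDeriv_comp_left,
    norm_iteratedFDeriv_fderiv]

theorem norm_gradient_sub_le_of_norm_iteratedFDeriv_two_le {M : ℝ} (hf : ContDiff ℝ 2 f)
    (hM : ∀ z, ‖iteratedFDeriv ℝ 2 f z‖ ≤ M) (y z : E) :
    ‖gradient f y - gradient f z‖ ≤ M * ‖y - z‖ := by
  rw [gradient_eq_gradientEquiv_comp, comp_apply, comp_apply, ← map_sub,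
    LinearIsometryEquiv.norm_map]
  exact norm_fderiv_sub_le_of_norm_iteratedFDeriv_two_le hf hM y z

end Gradient

end

/-- Taylor-expansion characterization of the sub-filter scale term: for `G, u` of
class `C³` with bounded second and third derivatives and `x` in the deep interior
of region 1 (`B(x, δ/2) ⊆ Ω₁`, so filtered fields are plain convolutions), there
is a constant `C` depending only on the bounds, with
`|τ_sfs(x) − ∫ (∇G(y) − ∇G(x))·((y−x)·∇(∇u)(x)) g_δ(x−y) dy| ≤ C δ³`. -/
theorem stmt17 {n : ℕ}
    (G u : EuclideanSpace ℝ (Fin n) → ℝ)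
    (hG : ContDiff ℝ 3 G) (hu : ContDiff ℝ 3 u)
    (M : ℝ)
    (hbG : ∀ x, ‖iteratedFDeriv ℝ 2 G x‖ ≤ M ∧ ‖iteratedFDeriv ℝ 3 G x‖ ≤ M)
    (hbu : ∀ x, ‖iteratedFDeriv ℝ 2 u x‖ ≤ M ∧ ‖iteratedFDeriv ℝ 3 u x‖ ≤ M)
    (Ω₁ : Set (EuclideanSpace ℝ (Fin n))) :
    ∃ C : ℝ, ∀ δ : ℝ, 0 < δ →
      ∀ gδ : EuclideanSpace ℝ (Fin n) → ℝ, Integrable gδ →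
        (∀ y, 0 ≤ gδ y) → (∀ y, gδ (-y) = gδ y) →
        (∀ y : EuclideanSpace ℝ (Fin n), δ / 2 ≤ ‖y‖ → gδ y = 0) →
        (∫ y, gδ y = 1) →
        ∀ x : EuclideanSpace ℝ (Fin n), closedBall x (δ / 2) ⊆ Ω₁ →
          |((∫ y, (inner ℝ (gradient G y) (gradient u y) : ℝ) * gδ (x - y)) -
              (inner ℝ (∫ y, gδ (x - y) • gradient G y)
                (∫ y, gδ (x - y) • gradient u y) : ℝ)) -
            ∫ y, (inner ℝ (gradient G y - gradient G x)
                ((fderiv ℝ (gradient u) x) (y - x)) : ℝ) * gδ (x - y)| ≤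
          C * δ ^ 3 := by
  refine ⟨M ^ 2 / 4, fun δ _ gδ hgδ hgδ₀ hgδ_even hgδ_supp hgδ₁ x _ => ?_⟩
  set w := fun y => gδ (x - y)
  have hw : Integrable w := hgδ.comp_sub_left x
  have hw₁ : ∫ y, w y = 1 := by rw [integral_sub_left_eq_self gδ volume x, hgδ₁]
  have hwK : support w ⊆ closedBall x (δ / 2) := fun y hy => by
    rw [mem_closedBall_iff_norm']
    by_contra! h
    exact hy (hgδ_supp _ h.le)
  have hnear : ∀ y, w y ≠ 0 → ‖y - x‖ ≤ δ / 2 := fun y hy => mem_closedBall_iff_norm.mp (hwK hy)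
  have hM₀ : 0 ≤ M := (norm_nonneg _).trans (hbG x).1
  have hGgrad : ContDiff ℝ 2 (gradient G) := hG.gradient
  have hugrad : ContDiff ℝ 2 (gradient u) := hu.gradient
  change |weightedCov volume w (gradient G) (gradient u) - _| ≤ _
  rw [weightedCov_eq_linear_add_remainder hw (isCompact_closedBall x (δ / 2)) hwK hw₁
    (Function.Even.integral_comp_sub_smul_sub_eq_zero hgδ_even x) hGgrad.continuous
    hugrad.continuous (fderiv ℝ (gradient u) x), add_sub_cancel_left]
  calc _ ≤ 2 * (M * (δ / 2)) * (M * (δ / 2) ^ 2) :=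
        abs_integral_inner_sub_mean_mul_le (c := gradient G x) (fun y => hgδ₀ _) hw hw₁
          (hw.smul_continuous_of_support_subset (isCompact_closedBall x (δ / 2)) hwK
            hGgrad.continuous)
          (fun y hy => ?_) (fun y hy => ?_)
    _ = M ^ 2 / 4 * δ ^ 3 := by ring
  · exact (norm_gradient_sub_le_of_norm_iteratedFDeriv_two_le (hG.of_le (by norm_num))
      (fun z => (hbG z).1) y x).trans (mul_le_mul_of_nonneg_left (hnear y hy) hM₀)
  · exact (norm_sub_sub_fderiv_apply_le_of_norm_iteratedFDeriv_two_le hugrad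
      (fun z => (norm_iteratedFDeriv_gradient u 2 z).trans_le (hbu z).2) x y).trans
      (mul_le_mul_of_nonneg_left (pow_le_pow_left₀ (norm_nonneg _) (hnear y hy) 2) hM₀)
end

section
/- For the filtered volume fraction of the disk complement: with region 1 = {p ∈ ℝ² : ‖p − c‖ > R} and g_δ a radial nonnegative kernel supported in B(0,δ/2) with unit integral and δ/2 < R, the function α_δ(p) depends only on ‖p − c‖, is nondecreasing in ‖p − c‖, equals 0 for ‖p − c‖ ≤ R − δ/2, and equals 1 for ‖p − c‖ ≥ R + δ/2. -/
/-!
Substituting `z = p - y` turns `α_δ(p)` into the mass that the kernel `g_δ` puts outside the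
closed ball of radius `R` around `d = p - c`. A reflection exchanging `d` and `d'` with
`‖d‖ = ‖d'‖` preserves the radial kernel and Lebesgue measure, so this mass depends only on
`‖d‖`. Along a ray `t ↦ t • a` the squared distance `‖t • a - z‖²` is a convex quadratic in `t`
which is at most `R²` at `t = 0` whenever `z` lies in the support of the kernel; once it exceeds
`R²` it therefore keeps increasing, so the region `{z | R < ‖t • a - z‖}` only gains kernel mass
as `t` grows. The values `0` and `1` follow from the triangle inequality and the support bound.
-/

open MeasureTheory

variable {E : Type*} [NormedAddCommGroup E] [InnerProductSpace ℝ E]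

noncomputable def massOutsideBall [MeasureSpace E] (g : E → ℝ) (d : E) (R : ℝ) : ℝ :=
  ∫ z in {z | R < ‖d - z‖}, g z

theorem lt_norm_smul_sub_of_lt_norm_smul_sub {a z : E} {R s t : ℝ} (hz : ‖z‖ ≤ R)
    (hs : R < ‖s • a - z‖) (hs0 : 0 ≤ s) (hst : s ≤ t) : R < ‖t • a - z‖ := by
  have hR : 0 ≤ R := (norm_nonneg z).trans hz
  have hsq : ∀ r : ℝ, ‖r • a - z‖ ^ 2 = r ^ 2 * ‖a‖ ^ 2 - 2 * r * inner ℝ a z + ‖z‖ ^ 2 := by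
    intro r
    rw [norm_sub_sq_real, norm_smul, real_inner_smul_left, Real.norm_eq_abs, mul_pow, sq_abs]
    ring
  -- `‖s • a - z‖² - ‖z‖² = s * (s‖a‖² - 2⟪a, z⟫)`; positivity of the second factor makes the
  -- quadratic increasing on `[s, ∞)`
  have hgrowth : 0 < s * (s * ‖a‖ ^ 2 - 2 * inner ℝ a z) := by
    nlinarith [hsq s, pow_lt_pow_left₀ hs hR two_ne_zero, pow_le_pow_left₀ (norm_nonneg z) hz 2]
  have hslope : 0 < s * ‖a‖ ^ 2 - 2 * inner ℝ a z := pos_of_mul_pos_right hgrowth hs0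
  have hsqt : ‖s • a - z‖ ^ 2 ≤ ‖t • a - z‖ ^ 2 := by
    rw [hsq, hsq]
    nlinarith [mul_nonneg (sub_nonneg.2 hst) (sq_nonneg ‖a‖), mul_nonneg hs0 (sq_nonneg ‖a‖)]
  exact hs.trans_le (pow_le_pow_iff_left₀ (norm_nonneg _) (norm_nonneg _) two_ne_zero |>.1 hsqt)

variable [MeasurableSpace E] [BorelSpace E] [FiniteDimensional ℝ E]

theorem massOutsideBall_eq_integral_indicator (g : E → ℝ) (d : E) (R : ℝ) :
    massOutsideBall g d R = ∫ z, {z | R < ‖d - z‖}.indicator g z :=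
  (integral_indicator (measurableSet_lt measurable_const (by fun_prop))).symm

theorem setIntegral_comp_sub_eq_massOutsideBall (g : E → ℝ) (c p : E) (R : ℝ) :
    ∫ y in {y | R < ‖y - c‖}, g (p - y) = massOutsideBall g (p - c) R := by
  rw [massOutsideBall_eq_integral_indicator,
    ← integral_indicator (measurableSet_lt measurable_const (by fun_prop)),
    ← integral_sub_left_eq_self (fun z => {z | R < ‖p - c - z‖}.indicator g z) volume p]
  congr 1 with y
  simp only [Set.indicator_apply, Set.mem_ofPred_eq, sub_sub_sub_cancel_left]

theorem massOutsideBall_eq_of_norm_eq {g : E → ℝ} {h : ℝ → ℝ} (hrad : ∀ z, g z = h ‖z‖)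
    (R : ℝ) {d d' : E} (hd : ‖d‖ = ‖d'‖) : massOutsideBall g d R = massOutsideBall g d' R := by
  set O : E ≃ₗᵢ[ℝ] E := Submodule.reflection (ℝ ∙ (d - d'))ᗮ
  have hOd : O d = d' := Submodule.reflection_sub hd
  have hcomp : ∀ z, {z | R < ‖d' - z‖}.indicator g (O z) = {z | R < ‖d - z‖}.indicator g z := by
    intro z
    simp only [Set.indicator_apply, Set.mem_ofPred_eq, ← hOd, ← map_sub, O.norm_map, hrad]
  rw [massOutsideBall_eq_integral_indicator, massOutsideBall_eq_integral_indicator]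
  simp_rw [← hcomp]
  exact O.measurePreserving.integral_comp O.toHomeomorph.measurableEmbedding _

theorem massOutsideBall_smul_le_smul {g : E → ℝ} (hgi : Integrable g) (hg0 : ∀ z, 0 ≤ g z)
    {ρ R : ℝ} (hsupp : ∀ z, ρ ≤ ‖z‖ → g z = 0) (hρR : ρ ≤ R) (a : E) {s t : ℝ} (hs0 : 0 ≤ s)
    (hst : s ≤ t) : massOutsideBall g (s • a) R ≤ massOutsideBall g (t • a) R := by
  rw [massOutsideBall_eq_integral_indicator, massOutsideBall_eq_integral_indicator]
  refine integral_mono (hgi.indicator (measurableSet_lt measurable_const (by fun_prop)))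
    (hgi.indicator (measurableSet_lt measurable_const (by fun_prop))) fun z => ?_
  by_cases hgz : g z = 0
  · simp [Set.indicator_apply, hgz]
  have hz : ‖z‖ ≤ R := (lt_of_not_ge (mt (hsupp z) hgz)).le.trans hρR
  by_cases hsz : R < ‖s • a - z‖
  · simp [hsz, lt_norm_smul_sub_of_lt_norm_smul_sub hz hsz hs0 hst]
  · simp only [Set.indicator_apply, Set.mem_ofPred_eq, hsz, if_false]
    split_ifs <;> simp [hg0 z]

theorem massOutsideBall_mono [Nontrivial E] {g : E → ℝ} (hgi : Integrable g) {h : ℝ → ℝ}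
    (hrad : ∀ z, g z = h ‖z‖) (hg0 : ∀ z, 0 ≤ g z) {ρ R : ℝ} (hsupp : ∀ z, ρ ≤ ‖z‖ → g z = 0)
    (hρR : ρ ≤ R) {d d' : E} (hd : ‖d‖ ≤ ‖d'‖) :
    massOutsideBall g d R ≤ massOutsideBall g d' R := by
  obtain ⟨e, he⟩ := exists_norm_eq E zero_le_one
  have hnorm : ∀ x : E, ‖x‖ = ‖‖x‖ • e‖ := fun x => by simp [norm_smul, he]
  rw [massOutsideBall_eq_of_norm_eq hrad R (hnorm d),
    massOutsideBall_eq_of_norm_eq hrad R (hnorm d')]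
  exact massOutsideBall_smul_le_smul hgi hg0 hsupp hρR e (norm_nonneg d) hd

theorem massOutsideBall_eq_zero {g : E → ℝ} {ρ R : ℝ} (hsupp : ∀ z, ρ ≤ ‖z‖ → g z = 0) {d : E}
    (hd : ‖d‖ ≤ R - ρ) : massOutsideBall g d R = 0 :=
  setIntegral_eq_zero_of_forall_eq_zero fun z hz =>
    hsupp z (by linarith [norm_sub_le d z, (show R < ‖d - z‖ from hz)])

theorem massOutsideBall_eq_integral {g : E → ℝ} {ρ R : ℝ} (hsupp : ∀ z, ρ ≤ ‖z‖ → g z = 0) {d : E}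
    (hd : R + ρ ≤ ‖d‖) : massOutsideBall g d R = ∫ z, g z :=
  setIntegral_eq_integral_of_forall_compl_eq_zero fun z hz =>
    hsupp z (by linarith [norm_sub_norm_le d z, not_lt.1 (show ¬R < ‖d - z‖ from hz)])

theorem stmt19_general (c : EuclideanSpace ℝ (Fin 2)) (R δ : ℝ)
    (hδ : δ < 2 * R)
    (gδ : EuclideanSpace ℝ (Fin 2) → ℝ) (hgi : Integrable gδ)
    (h : ℝ → ℝ) (hh0 : ∀ s, 0 ≤ h s)
    (hrad : ∀ y, gδ y = h ‖y‖)
    (hsupp : ∀ y : EuclideanSpace ℝ (Fin 2), δ / 2 ≤ ‖y‖ → gδ y = 0)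
    (hg1 : ∫ y, gδ y = 1)
    (α : EuclideanSpace ℝ (Fin 2) → ℝ)
    (hα : ∀ p, α p = ∫ y in {y : EuclideanSpace ℝ (Fin 2) | R < ‖y - c‖}, gδ (p - y)) :
    (∀ p q, ‖p - c‖ = ‖q - c‖ → α p = α q) ∧
      (∀ p q, ‖p - c‖ ≤ ‖q - c‖ → α p ≤ α q) ∧
      (∀ p, ‖p - c‖ ≤ R - δ / 2 → α p = 0) ∧
      (∀ p, R + δ / 2 ≤ ‖p - c‖ → α p = 1) := by
  have hα' : ∀ p, α p = massOutsideBall gδ (p - c) R := fun p =>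
    (hα p).trans (setIntegral_comp_sub_eq_massOutsideBall gδ c p R)
  have hmono : ∀ p q, ‖p - c‖ ≤ ‖q - c‖ → α p ≤ α q := fun p q hpq => by
    rw [hα', hα']
    exact massOutsideBall_mono hgi hrad (fun z => hrad z ▸ hh0 _) hsupp (by linarith) hpq
  refine ⟨fun p q hpq => le_antisymm (hmono p q hpq.le) (hmono q p hpq.ge), hmono,
    fun p hp => ?_, fun p hp => ?_⟩
  · rw [hα', massOutsideBall_eq_zero hsupp hp]
  · rw [hα', massOutsideBall_eq_integral hsupp hp, hg1]

/-- Filtered volume fraction of the disk complement: with region 1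
`{p : ‖p − c‖ > R}` and a radial nonnegative kernel `g_δ` supported in
`B(0, δ/2)` with unit integral and `δ/2 < R`, the volume fraction
`α_δ(p) = ∫_{‖y−c‖>R} g_δ(p−y) dy` depends only on `‖p − c‖`, is nondecreasing in
`‖p − c‖`, equals `0` for `‖p − c‖ ≤ R − δ/2`, and equals `1` for
`‖p − c‖ ≥ R + δ/2`. -/
theorem stmt19 (c : EuclideanSpace ℝ (Fin 2)) (R δ : ℝ)
    (hR : 0 < R) (hδ0 : 0 < δ) (hδ : δ < 2 * R)
    (gδ : EuclideanSpace ℝ (Fin 2) → ℝ) (hgi : Integrable gδ)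
    (h : ℝ → ℝ) (hh0 : ∀ s, 0 ≤ h s)
    (hrad : ∀ y, gδ y = h ‖y‖)
    (hsupp : ∀ y : EuclideanSpace ℝ (Fin 2), δ / 2 ≤ ‖y‖ → gδ y = 0)
    (hg1 : ∫ y, gδ y = 1)
    (α : EuclideanSpace ℝ (Fin 2) → ℝ)
    (hα : ∀ p, α p = ∫ y in {y : EuclideanSpace ℝ (Fin 2) | R < ‖y - c‖}, gδ (p - y)) :
    (∀ p q, ‖p - c‖ = ‖q - c‖ → α p = α q) ∧
      (∀ p q, ‖p - c‖ ≤ ‖q - c‖ → α p ≤ α q) ∧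
      (∀ p, ‖p - c‖ ≤ R - δ / 2 → α p = 0) ∧
      (∀ p, R + δ / 2 ≤ ‖p - c‖ → α p = 1) :=
  stmt19_general c R δ hδ gδ hgi h hh0 hrad hsupp hg1 α hα
end
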